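/- arXiv:1808.09520 — 3 statements merged into one kernel-verified Lean document; each statement's English description precedes it below -/
import Mathlib

section
/- Let n ≥ 2, r > 0, μ > 0, and let g : [0,r] → ℝ be a C² function satisfying g'' (t) + ((n-1)/t)·g'(t) + (μ - (n-1)/t²)·g(t) = 0 for t ∈ (0,r], with g(0) = 0, g'(r) = 0, g > 0 on (0,r], g' > 0 on [0,r), and lim_{t→0⁺} (g'(t) - g(t)/t) = 0. Then g'(t) - g(t)/t ≤ 0 for all t ∈ (0,r]. -/
/-!
Consider `w t = tⁿ⁻¹ (t g'(t) - g(t)) = tⁿ (g'(t) - g(t)/t)`, the Wronskian of `g` and of the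
solution `t ↦ t` of the equation with `μ = 0`, weighted as in Abel's identity. The equation turns
into `w' = -μ tⁿ g ≤ 0` on `(0, r)`, so `w` is antitone there, and `w → 0` at `0⁺`; hence `w ≤ 0`
on `(0, r)`. At `t = r` the claim is `-g(r)/r ≤ 0`.
-/

open Set Filter Topology

theorem AntitoneOn.le_of_tendsto_nhdsGT {α β : Type*} [TopologicalSpace α] [LinearOrder α]
    [OrderTopology α] [DenselyOrdered α] [TopologicalSpace β] [Preorder β]
    [OrderClosedTopology β] {w : α → β} {a b t : α} {L : β}
    (hw : AntitoneOn w (Ioo a b)) (hlim : Tendsto w (𝓝[>] a) (𝓝 L)) (ht : t ∈ Ioo a b) :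
    w t ≤ L := by
  have : (𝓝[>] a).NeBot := nhdsGT_neBot_of_exists_gt ⟨t, ht.1⟩
  refine ge_of_tendsto hlim ?_
  filter_upwards [Ioo_mem_nhdsGT ht.1] with s hs
  exact hw ⟨hs.1, hs.2.trans ht.2⟩ ht hs.2.le

theorem hasDerivAt_pow_mul_sub_div {g g' : ℝ → ℝ} {g'' x : ℝ} (n : ℕ) (hx : x ≠ 0)
    (hg : HasDerivAt g (g' x) x) (hg' : HasDerivAt g' g'' x) :
    HasDerivAt (fun t => t ^ n * (g' t - g t / t))
      (x ^ n * (g'' + (n - 1) / x * g' x - (n - 1) / x ^ 2 * g x)) x := by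
  refine ((hasDerivAt_pow n x).mul (hg'.sub (hg.div (hasDerivAt_id x) hx))).congr_deriv ?_
  simp only [Pi.sub_apply, Pi.div_apply, id, mul_one]
  rcases n with _ | n
  · simp only [Nat.cast_zero, pow_zero, zero_mul, one_mul, zero_add]
    field_simp
    ring
  · simp only [Nat.cast_succ, Nat.add_sub_cancel]
    field_simp
    ring

theorem ContDiffOn.hasDerivAt_deriv {g : ℝ → ℝ} {s : Set ℝ} {x : ℝ}
    (hg : ContDiffOn ℝ 2 g s) (hx : s ∈ 𝓝 x) : HasDerivAt (deriv g) (deriv (deriv g) x) x := by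
  obtain ⟨u, hus, hu, hxu⟩ := mem_nhds_iff.1 hx
  have hdg : ContDiffOn ℝ 1 (deriv g) u := (hg.mono hus).deriv_of_isOpen hu (by norm_num)
  exact ((hdg.differentiableOn one_ne_zero x hxu).differentiableAt (hu.mem_nhds hxu)).hasDerivAt

theorem stmt_2_general (n : ℕ) (r μ : ℝ) (hμ : 0 < μ)
    (g : ℝ → ℝ) (hg : ContDiffOn ℝ 2 g (Icc 0 r))
    (hode : ∀ t ∈ Ioc (0:ℝ) r,
      deriv (deriv g) t + ((n - 1 : ℝ) / t) * deriv g t + (μ - (n - 1 : ℝ) / t ^ 2) * g t = 0)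
    (hgr : deriv g r = 0)
    (hgpos : ∀ t ∈ Ioc (0:ℝ) r, 0 < g t)
    (hlim : Tendsto (fun t => deriv g t - g t / t) (nhdsWithin 0 (Ioi 0)) (nhds 0)) :
    ∀ t ∈ Ioc (0:ℝ) r, deriv g t - g t / t ≤ 0 := by
  intro t ht
  rcases ht.2.eq_or_lt with rfl | htr
  · rw [hgr, zero_sub, neg_nonpos]
    exact (div_pos (hgpos t ht) ht.1).le
  set w : ℝ → ℝ := fun s => s ^ n * (deriv g s - g s / s)
  have hw' : ∀ s ∈ Ioo (0:ℝ) r, HasDerivAt w (-(μ * (s ^ n * g s))) s := by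
    intro s hs
    have hs' : Icc 0 r ∈ 𝓝 s := Icc_mem_nhds hs.1 hs.2
    have hg₁ := ((hg.contDiffAt hs').differentiableAt two_ne_zero).hasDerivAt
    refine (hasDerivAt_pow_mul_sub_div n hs.1.ne' hg₁ (hg.hasDerivAt_deriv hs')).congr_deriv ?_
    linear_combination s ^ n * hode s ⟨hs.1, hs.2.le⟩
  have hanti : AntitoneOn w (Ioo 0 r) := by
    refine antitoneOn_of_hasDerivWithinAt_nonpos (f' := fun s => -(μ * (s ^ n * g s)))
      (convex_Ioo 0 r)
      (fun s hs => (hw' s hs).continuousAt.continuousWithinAt) ?_ ?_ <;> rw [interior_Ioo]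
    · exact fun s hs => (hw' s hs).hasDerivWithinAt
    · exact fun s hs => neg_nonpos.2 <|
        mul_nonneg hμ.le (mul_nonneg (pow_nonneg hs.1.le n) (hgpos s ⟨hs.1, hs.2.le⟩).le)
  have hw0 : Tendsto w (𝓝[>] 0) (𝓝 0) := by
    simpa using (((continuous_pow n).tendsto 0).mono_left nhdsWithin_le_nhds).mul hlim
  exact nonpos_of_mul_nonpos_right (hanti.le_of_tendsto_nhdsGT hw0 ⟨ht.1, htr⟩) (pow_pos ht.1 n)

theorem stmt_2 (n : ℕ) (hn : 2 ≤ n) (r μ : ℝ) (hr : 0 < r) (hμ : 0 < μ)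
    (g : ℝ → ℝ) (hg : ContDiffOn ℝ 2 g (Icc 0 r))
    (hode : ∀ t ∈ Ioc (0:ℝ) r,
      deriv (deriv g) t + ((n - 1 : ℝ) / t) * deriv g t + (μ - (n - 1 : ℝ) / t ^ 2) * g t = 0)
    (hg0 : g 0 = 0) (hgr : deriv g r = 0)
    (hgpos : ∀ t ∈ Ioc (0:ℝ) r, 0 < g t)
    (hg'pos : ∀ t ∈ Ico (0:ℝ) r, 0 < deriv g t)
    (hlim : Tendsto (fun t => deriv g t - g t / t) (nhdsWithin 0 (Ioi 0)) (nhds 0)) :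
    ∀ t ∈ Ioc (0:ℝ) r, deriv g t - g t / t ≤ 0 :=
  stmt_2_general n r μ hμ g hg hode hgr hgpos hlim
end

section
/- Let n ≥ 2, r > 0, μ > 0, and let g : (0,r] → ℝ be a C² positive function with g' > 0 on (0,r), g'(r) = 0, satisfying g''(t) + ((n-1)/t)g'(t) + (μ - (n-1)/t²)g(t) = 0 on (0,r], and g'(t) - g(t)/t ≤ 0 on (0,r]. Define F(t) = g'(t)² + (n-1)·g(t)²/t². Then F is (weakly) decreasing on (0,r]. -/
/-!
Differentiating along the ODE gives
`F' = -2μ g g' - 2(n-1)(t g' - g)² / t³ ≤ 0` on `(0, r)`.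
At the endpoint `r` the two-sided `deriv g` need not be continuous, so the mean value argument
is run on the energy built from the one-sided derivative `derivWithin g (Ioc 0 r)`, which is
continuous on `(0, r]` and agrees with `F` on `(0, r)`; since `deriv g r = 0`, `F r` is at most
the value of that energy at `r`.
-/

open Set

noncomputable def radialEnergy (c : ℝ) (g g' : ℝ → ℝ) (t : ℝ) : ℝ :=
  g' t ^ 2 + c * g t ^ 2 / t ^ 2

theorem AntitoneOn.of_eqOn_Ioo_of_le {α β : Type*} [LinearOrder α] [Preorder β]
    {f g : α → β} {a b : α} (hg : AntitoneOn g (Ioc a b)) (heq : EqOn f g (Ioo a b))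
    (hb : f b ≤ g b) : AntitoneOn f (Ioc a b) := by
  intro x hx y hy hxy
  rcases hy.2.lt_or_eq with hyb | rfl
  · have hxb : x < b := hxy.trans_lt hyb
    rw [heq ⟨hx.1, hxb⟩, heq ⟨hy.1, hyb⟩]
    exact hg hx hy hxy
  · rcases hxy.lt_or_eq with hxy | rfl
    · rw [heq ⟨hx.1, hxy⟩]
      exact hb.trans (hg hx hy hxy.le)
    · exact le_rfl

theorem hasDerivAt_radialEnergy_of_ode {c μ t a : ℝ} {g g' : ℝ → ℝ} (ht : t ≠ 0)
    (hg : HasDerivAt g (g' t) t) (hg' : HasDerivAt g' a t)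
    (hode : a + c / t * g' t + (μ - c / t ^ 2) * g t = 0) :
    HasDerivAt (radialEnergy c g g')
      (-(2 * μ * g t * g' t) - 2 * c * (t * g' t - g t) ^ 2 / t ^ 3) t := by
  have hderiv : HasDerivAt (radialEnergy c g g') (2 * g' t ^ 1 * a +
      (c * (2 * g t ^ 1 * g' t) * t ^ 2 - c * g t ^ 2 * (2 * t ^ 1)) / (t ^ 2) ^ 2) t :=
    (hg'.pow 2).add (((hg.pow 2).const_mul c).div (hasDerivAt_pow 2 t) (pow_ne_zero 2 ht))
  refine hderiv.congr_deriv ?_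
  have ha : a = -(c / t * g' t + (μ - c / t ^ 2) * g t) := by linear_combination hode
  rw [ha]
  field_simp
  ring

theorem antitoneOn_radialEnergy_derivWithin {c μ r : ℝ} (hc : 0 ≤ c) (hμ : 0 ≤ μ)
    {g : ℝ → ℝ} (hg : ContDiffOn ℝ 2 g (Ioc 0 r))
    (hgg' : ∀ t ∈ Ioo 0 r, 0 ≤ g t * deriv g t)
    (hode : ∀ t ∈ Ioo 0 r,
      deriv (deriv g) t + c / t * deriv g t + (μ - c / t ^ 2) * g t = 0) :
    AntitoneOn (radialEnergy c g (derivWithin g (Ioc 0 r))) (Ioc 0 r) := by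
  have hcont : ContinuousOn (radialEnergy c g (derivWithin g (Ioc 0 r))) (Ioc 0 r) :=
    ((hg.continuousOn_derivWithin (uniqueDiffOn_Ioc 0 r) one_le_two).pow 2).add <|
      (continuousOn_const.mul (hg.continuousOn.pow 2)).div (continuousOn_pow 2)
        fun t ht => pow_ne_zero 2 ht.1.ne'
  refine antitoneOn_of_hasDerivWithinAt_nonpos (convex_Ioc 0 r) hcont
    (f' := fun t => -(2 * μ * g t * deriv g t) - 2 * c * (t * deriv g t - g t) ^ 2 / t ^ 3)
    (fun t ht => ?_) (fun t ht => ?_)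
  · rw [interior_Ioc] at ht ⊢
    have hgt : ContDiffAt ℝ 2 g t := hg.contDiffAt (Ioc_mem_nhds ht.1 ht.2)
    have hderivWithin : derivWithin g (Ioc 0 r) =ᶠ[nhds t] deriv g := by
      filter_upwards [Ioo_mem_nhds ht.1 ht.2] with x hx
      exact derivWithin_of_mem_nhds (Ioc_mem_nhds hx.1 hx.2)
    have hg'_at : HasDerivAt (derivWithin g (Ioc 0 r)) (deriv (deriv g) t) t :=
      ((hgt.derivWithin (m := 1) (by norm_num)).differentiableAt one_ne_zero).hasDerivAt
        |>.congr_of_eventuallyEq hderivWithin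
    have hg_at : HasDerivAt g (derivWithin g (Ioc 0 r) t) t := by
      rw [hderivWithin.eq_of_nhds]
      exact (hgt.differentiableAt two_ne_zero).hasDerivAt
    have henergy := hasDerivAt_radialEnergy_of_ode ht.1.ne' hg_at hg'_at
      (by rw [hderivWithin.eq_of_nhds]; exact hode t ht)
    rw [hderivWithin.eq_of_nhds] at henergy
    exact henergy.hasDerivWithinAt
  · rw [interior_Ioc] at ht
    have h₁ : 0 ≤ 2 * μ * g t * deriv g t := by
      rw [mul_assoc]; exact mul_nonneg (by positivity) (hgg' t ht)
    have h₂ : 0 ≤ 2 * c * (t * deriv g t - g t) ^ 2 / t ^ 3 := by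
      have := ht.1; positivity
    linarith

theorem stmt_3_general (n : ℕ) (hn : 2 ≤ n) (r μ : ℝ) (hμ : 0 < μ)
    (g : ℝ → ℝ) (hg : ContDiffOn ℝ 2 g (Ioc 0 r))
    (hgpos : ∀ t ∈ Ioc (0:ℝ) r, 0 < g t)
    (hg'pos : ∀ t ∈ Ioo (0:ℝ) r, 0 < deriv g t)
    (hgr : deriv g r = 0)
    (hode : ∀ t ∈ Ioc (0:ℝ) r,
      deriv (deriv g) t + ((n - 1 : ℝ) / t) * deriv g t + (μ - (n - 1 : ℝ) / t ^ 2) * g t = 0) :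
    AntitoneOn (fun t => (deriv g t) ^ 2 + (n - 1 : ℝ) * (g t) ^ 2 / t ^ 2) (Ioc 0 r) := by
  have hc : (0 : ℝ) ≤ n - 1 := by
    have : (2 : ℝ) ≤ n := by exact_mod_cast hn
    linarith
  have hG := antitoneOn_radialEnergy_derivWithin hc hμ.le hg
    (fun t ht => (mul_pos (hgpos t (Ioo_subset_Ioc_self ht)) (hg'pos t ht)).le)
    (fun t ht => hode t (Ioo_subset_Ioc_self ht))
  refine hG.of_eqOn_Ioo_of_le (fun t ht => ?_) ?_
  · simp only [radialEnergy, derivWithin_of_mem_nhds (Ioc_mem_nhds ht.1 ht.2)]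
  · simp only [radialEnergy, hgr]
    linarith [sq_nonneg (derivWithin g (Ioc 0 r) r)]

theorem stmt_3 (n : ℕ) (hn : 2 ≤ n) (r μ : ℝ) (hr : 0 < r) (hμ : 0 < μ)
    (g : ℝ → ℝ) (hg : ContDiffOn ℝ 2 g (Ioc 0 r))
    (hgpos : ∀ t ∈ Ioc (0:ℝ) r, 0 < g t)
    (hg'pos : ∀ t ∈ Ioo (0:ℝ) r, 0 < deriv g t)
    (hgr : deriv g r = 0)
    (hode : ∀ t ∈ Ioc (0:ℝ) r,
      deriv (deriv g) t + ((n - 1 : ℝ) / t) * deriv g t + (μ - (n - 1 : ℝ) / t ^ 2) * g t = 0)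
    (hineq : ∀ t ∈ Ioc (0:ℝ) r, deriv g t - g t / t ≤ 0) :
    AntitoneOn (fun t => (deriv g t) ^ 2 + (n - 1 : ℝ) * (g t) ^ 2 / t ^ 2) (Ioc 0 r) :=
  stmt_3_general n hn r μ hμ g hg hgpos hg'pos hgr hode
end

section
/- Let f : (0,∞) → (0,∞) be a decreasing function, let Ω ⊆ ℝⁿ be a bounded measurable set, and let B_r be the ball centered at the origin with |B_r| = |Ω| (where |·| is Lebesgue measure and ω_n = |B_1|). Set ρ₁ = (|Ω ∩ B_r|/ω_n)^(1/n) and ρ₂ = ((|Ω| + |Ω \ B_r|)/ω_n)^(1/n). Then ∫_{B_r} f(|x|) dx - ∫_Ω f(|x|) dx ≥ n·ω_n·∫_{ρ₁}^{ρ₂} |f(t) - f(r)|·t^{n-1} dt. -/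
/-!
Write `∫_{B_r} - ∫_Ω = ∫_{B_r \ Ω} - ∫_{Ω \ B_r}`; both sets have measure `|Ω \ B_r|`.
Since `f` is decreasing, among measurable subsets of `B_r` of that measure the outer shell
`B_r \ B_{ρ₁}` has the smallest integral of `f(|x|)`, and among subsets of the complement of
`B_r` the inner shell `B_{ρ₂} \ B_r` has the largest. In polar coordinates the difference of
the two shell integrals is `n ω_n ∫_{ρ₁}^{ρ₂} |f(t) - f(r)| t^(n-1) dt`, because `f ≥ f(r)`
on the first shell and `f ≤ f(r)` on the second.
-/

open Set MeasureTheory Metric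

namespace MeasureTheory

variable {X : Type*} [MeasurableSpace X] {μ : Measure X}

theorem setIntegral_le_setIntegral_of_measure_eq {s t : Set X} {g : X → ℝ} (c : ℝ)
    (hs : MeasurableSet s) (ht : MeasurableSet t) (hst : μ s = μ t) (hfin : μ s ≠ ⊤)
    (hgs : IntegrableOn g s μ) (hgt : IntegrableOn g t μ)
    (hle : ∀ᵐ x ∂μ.restrict (s \ t), g x ≤ c) (hge : ∀ᵐ x ∂μ.restrict (t \ s), c ≤ g x) :
    ∫ x in s, g x ∂μ ≤ ∫ x in t, g x ∂μ := by
  have hdiff : μ.real (s \ t) = μ.real (t \ s) := by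
    rw [measureReal_def, measureReal_def, measure_sdiff_symm hs.nullMeasurableSet
      ht.nullMeasurableSet hst (measure_ne_top_of_subset inter_subset_left hfin)]
  have hconst : ∀ u ⊆ s ∪ t, IntegrableOn (fun _ => c) u μ := fun u hu =>
    integrableOn_const (measure_ne_top_of_subset hu (measure_union_ne_top hfin (hst ▸ hfin)))
  have h₁ : ∫ x in s \ t, g x ∂μ ≤ μ.real (s \ t) * c := by
    simpa using setIntegral_mono_ae_restrict (hgs.mono_set sdiff_subset)
      (hconst _ (sdiff_subset.trans subset_union_left)) hle
  have h₂ : μ.real (t \ s) * c ≤ ∫ x in t \ s, g x ∂μ := by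
    simpa using setIntegral_mono_ae_restrict (hconst _ (sdiff_subset.trans subset_union_right))
      (hgt.mono_set sdiff_subset) hge
  rw [hdiff] at h₁
  rw [← integral_inter_add_sdiff ht hgs, ← integral_inter_add_sdiff hs hgt, inter_comm]
  linarith

end MeasureTheory

namespace MeasureTheory.Measure

open Module

variable {E : Type*} [NormedAddCommGroup E] [NormedSpace ℝ E] [FiniteDimensional ℝ E]
  [MeasurableSpace E] [BorelSpace E] (μ : Measure E) [μ.IsAddHaarMeasure] {f : ℝ → ℝ}

theorem setIntegral_le_setIntegral_ball_sdiff_ball_of_subset_compl (hf : AntitoneOn f (Ioi 0))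
    {D : Set E} {r R : ℝ} (hr : 0 < r) (hrR : r ≤ R) (hD : MeasurableSet D)
    (hDr : D ⊆ (ball 0 r)ᶜ) (hμD : μ D = μ (ball 0 R \ ball 0 r))
    (hintD : IntegrableOn (fun x => f ‖x‖) D μ)
    (hint : IntegrableOn (fun x => f ‖x‖) (ball 0 R \ ball 0 r) μ) :
    ∫ x in D, f ‖x‖ ∂μ ≤ ∫ x in ball 0 R \ ball 0 r, f ‖x‖ ∂μ := by
  have hR : 0 < R := hr.trans_le hrR
  refine setIntegral_le_setIntegral_of_measure_eq (f R) hD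
    (measurableSet_ball.diff measurableSet_ball) hμD
    (hμD ▸ measure_ne_top_of_subset sdiff_subset measure_ball_lt_top.ne) hintD hint ?_ ?_
  · filter_upwards [ae_restrict_mem (hD.diff (measurableSet_ball.diff measurableSet_ball))]
      with x ⟨hxD, hxE⟩
    have hRx : R ≤ ‖x‖ := by
      by_contra! h
      exact hxE ⟨by simpa using h, hDr hxD⟩
    exact hf hR (hR.trans_le hRx) hRx
  · filter_upwards [ae_restrict_mem ((measurableSet_ball.diff measurableSet_ball).diff hD)]
      with x ⟨⟨hxR, hxr⟩, _⟩
    have hrx : r ≤ ‖x‖ := by simpa using hxr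
    exact hf (hr.trans_le hrx) hR (mem_ball_zero_iff.mp hxR).le

variable [Nontrivial E]

theorem setIntegral_ball_sdiff_ball_fun_norm {a b : ℝ} (ha : 0 ≤ a) (hab : a ≤ b) (g : ℝ → ℝ) :
    ∫ x in ball (0 : E) b \ ball 0 a, g ‖x‖ ∂μ =
      finrank ℝ E * μ.real (ball 0 1) * ∫ t in a..b, g t * t ^ (finrank ℝ E - 1) := by
  have hball : ball (0 : E) a =ᵐ[μ] closedBall 0 a :=
    ae_eq_of_subset_of_measure_ge ball_subset_closedBall
      (addHaar_closedBall_eq_addHaar_ball μ 0 a).le measurableSet_ball.nullMeasurableSet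
      measure_closedBall_lt_top.ne
  have hind : (ball (0 : E) b \ closedBall 0 a).indicator (fun x => g ‖x‖) =
      fun x => (Ioo a b).indicator g ‖x‖ := by
    ext x
    simp only [indicator, mem_sdiff, mem_ball_zero_iff, mem_closedBall_zero_iff, not_le, mem_Ioo,
      and_comm]
  have hradial : ∫ t in Ioi 0, t ^ (finrank ℝ E - 1) • (Ioo a b).indicator g t =
      ∫ t in Ioo a b, g t * t ^ (finrank ℝ E - 1) := by
    conv_rhs => rw [← inter_eq_right.mpr (Ioo_subset_Ioi_self.trans (Ioi_subset_Ioi ha)),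
      ← setIntegral_indicator measurableSet_Ioo]
    congr 1 with t
    by_cases ht : t ∈ Ioo a b <;> simp [ht, mul_comm]
  rw [setIntegral_congr_set ((ae_eq_refl _).diff hball),
    ← integral_indicator (measurableSet_ball.diff measurableSet_closedBall), hind,
    integral_fun_norm_addHaar, hradial, intervalIntegral.integral_of_le hab,
    integral_Ioc_eq_integral_Ioo, nsmul_eq_mul, smul_eq_mul, mul_assoc]

theorem addHaar_ball_rpow_inv_finrank {m : ENNReal} (hm : m ≠ ⊤) :
    μ (ball (0 : E) ((m.toReal / μ.real (ball 0 1)) ^ ((1 : ℝ) / finrank ℝ E))) = m := by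
  have hω : 0 < μ.real (ball (0 : E) 1) :=
    ENNReal.toReal_pos (measure_ball_pos μ 0 one_pos).ne' measure_ball_lt_top.ne
  have hd : (finrank ℝ E : ℝ) ≠ 0 := by exact_mod_cast finrank_pos.ne'
  rw [addHaar_ball μ 0 (by positivity), ← Real.rpow_natCast, ← Real.rpow_mul (by positivity),
    one_div_mul_cancel hd, Real.rpow_one, ENNReal.ofReal_div_of_pos hω, ofReal_measureReal,
    ENNReal.ofReal_toReal hm,
    ENNReal.div_mul_cancel (measure_ball_pos μ 0 one_pos).ne' measure_ball_lt_top.ne]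

theorem le_of_addHaar_ball_le_addHaar_ball {ρ r : ℝ} (hρ : 0 ≤ ρ) (hr : 0 ≤ r)
    (h : μ (ball (0 : E) ρ) ≤ μ (ball 0 r)) : ρ ≤ r := by
  rw [addHaar_ball μ 0 hρ, addHaar_ball μ 0 hr,
    ENNReal.mul_le_mul_iff_left (measure_ball_pos μ 0 one_pos).ne' measure_ball_lt_top.ne,
    ENNReal.ofReal_le_ofReal_iff (by positivity)] at h
  exact (pow_le_pow_iff_left₀ hρ hr finrank_pos.ne').mp h

theorem setIntegral_ball_sdiff_ball_le_of_subset (hf : AntitoneOn f (Ioi 0)) {A : Set E}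
    {ρ r : ℝ} (hA : MeasurableSet A) (hAr : A ⊆ ball 0 r)
    (hμA : μ A = μ (ball 0 r \ ball 0 ρ)) (hint : IntegrableOn (fun x => f ‖x‖) (ball 0 r) μ) :
    ∫ x in ball 0 r \ ball 0 ρ, f ‖x‖ ∂μ ≤ ∫ x in A, f ‖x‖ ∂μ := by
  rcases le_or_gt ρ 0 with hρ | hρ
  -- `f ρ` is junk for `ρ ≤ 0`; then the shell is the whole ball and `A` fills it a.e.
  · rw [ball_eq_empty.mpr hρ, sdiff_empty] at hμA ⊢
    exact (setIntegral_congr_set (ae_eq_of_subset_of_measure_ge hAr hμA.ge hA.nullMeasurableSet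
      measure_ball_lt_top.ne)).ge
  refine setIntegral_le_setIntegral_of_measure_eq (f ρ) (measurableSet_ball.diff measurableSet_ball)
    hA hμA.symm (measure_ne_top_of_subset sdiff_subset measure_ball_lt_top.ne)
    (hint.mono_set sdiff_subset) (hint.mono_set hAr) ?_ ?_
  · filter_upwards [ae_restrict_mem ((measurableSet_ball.diff measurableSet_ball).diff hA)]
      with x ⟨⟨_, hxρ⟩, _⟩
    have hρx : ρ ≤ ‖x‖ := by simpa using hxρ
    exact hf hρ (hρ.trans_le hρx) hρx
  · filter_upwards [ae_restrict_mem (hA.diff (measurableSet_ball.diff measurableSet_ball)),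
      ae_restrict_of_ae (μ.ae_ne 0)] with x ⟨hxA, hxC⟩ hx0
    have hxρ : ‖x‖ < ρ := by
      by_contra! h
      exact hxC ⟨hAr hxA, by simpa using h⟩
    exact hf (norm_pos_iff.mpr hx0) hρ hxρ.le

theorem setIntegral_ball_sdiff_ball_sub_setIntegral_ball_sdiff_ball (hf : AntitoneOn f (Ioi 0))
    {ρ₁ r ρ₂ : ℝ} (hρ₁ : 0 ≤ ρ₁) (hρ₁r : ρ₁ ≤ r) (hr : 0 < r) (hrρ₂ : r ≤ ρ₂)
    (hμ : μ (ball 0 r \ ball 0 ρ₁) = μ (ball 0 ρ₂ \ ball 0 r))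
    (hint : IntegrableOn (fun x => f ‖x‖) (ball 0 ρ₂) μ) :
    ∫ x in ball 0 r \ ball 0 ρ₁, f ‖x‖ ∂μ - ∫ x in ball 0 ρ₂ \ ball 0 r, f ‖x‖ ∂μ =
      finrank ℝ E * μ.real (ball 0 1) * ∫ t in ρ₁..ρ₂, |f t - f r| * t ^ (finrank ℝ E - 1) := by
  set C := ball (0 : E) r \ ball 0 ρ₁
  set S := ball (0 : E) ρ₂ \ ball 0 r
  have hCm : MeasurableSet C := measurableSet_ball.diff measurableSet_ball
  have hSm : MeasurableSet S := measurableSet_ball.diff measurableSet_ball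
  have hCint : IntegrableOn (fun x => f ‖x‖) C μ :=
    hint.mono_set (sdiff_subset.trans (ball_subset_ball hrρ₂))
  have hSint : IntegrableOn (fun x => f ‖x‖) S μ := hint.mono_set sdiff_subset
  have hCconst : IntegrableOn (fun _ => f r) C μ :=
    integrableOn_const (measure_ne_top_of_subset sdiff_subset measure_ball_lt_top.ne)
  have hSconst : IntegrableOn (fun _ => f r) S μ :=
    integrableOn_const (measure_ne_top_of_subset sdiff_subset measure_ball_lt_top.ne)
  have hC : ∫ x in C, |f ‖x‖ - f r| ∂μ = ∫ x in C, f ‖x‖ ∂μ - μ.real C * f r := by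
    rw [← smul_eq_mul, ← setIntegral_const, ← integral_sub hCint hCconst]
    refine setIntegral_congr_ae hCm ?_
    filter_upwards [μ.ae_ne 0] with x hx0 ⟨hxr, _⟩
    exact abs_of_nonneg
      (sub_nonneg.mpr (hf (norm_pos_iff.mpr hx0) hr (mem_ball_zero_iff.mp hxr).le))
  have hS : ∫ x in S, |f ‖x‖ - f r| ∂μ = μ.real S * f r - ∫ x in S, f ‖x‖ ∂μ := by
    rw [← smul_eq_mul, ← setIntegral_const, ← integral_sub hSconst hSint]
    refine setIntegral_congr_fun hSm fun x ⟨_, hxr⟩ => ?_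
    have hrx : r ≤ ‖x‖ := by simpa using hxr
    exact (abs_of_nonpos (sub_nonpos.mpr (hf hr (hr.trans_le hrx) hrx))).trans (neg_sub _ _)
  have hunion : ∫ x in C, |f ‖x‖ - f r| ∂μ + ∫ x in S, |f ‖x‖ - f r| ∂μ =
      ∫ x in ball 0 ρ₂ \ ball 0 ρ₁, |f ‖x‖ - f r| ∂μ := by
    have hCabs : IntegrableOn (fun x => |f ‖x‖ - f r|) C μ := (hCint.sub hCconst).abs
    have hSabs : IntegrableOn (fun x => |f ‖x‖ - f r|) S μ := (hSint.sub hSconst).abs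
    rw [← setIntegral_union (disjoint_sdiff_right.mono_left sdiff_subset) hSm hCabs hSabs,
      union_comm, sdiff_union_sdiff_cancel (ball_subset_ball hrρ₂) (ball_subset_ball hρ₁r)]
  have hCS : μ.real C = μ.real S := by rw [measureReal_def, measureReal_def, hμ]
  rw [← setIntegral_ball_sdiff_ball_fun_norm μ hρ₁ (hρ₁r.trans hrρ₂) (fun t => |f t - f r|),
    ← hunion, hC, hS, hCS]
  ring

theorem le_setIntegral_ball_sub_setIntegral (hf : AntitoneOn f (Ioi 0)) {Ω : Set E}
    {ρ₁ r ρ₂ : ℝ} (hΩ : MeasurableSet Ω) (hρ₁ : 0 ≤ ρ₁) (hr : 0 < r) (hρ₂ : 0 ≤ ρ₂)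
    (hΩr : μ (ball 0 r) = μ Ω) (hμρ₁ : μ (ball 0 ρ₁) = μ (Ω ∩ ball 0 r))
    (hμρ₂ : μ (ball 0 ρ₂) = μ Ω + μ (Ω \ ball 0 r))
    (hintΩ : IntegrableOn (fun x => f ‖x‖) Ω μ)
    (hint : IntegrableOn (fun x => f ‖x‖) (ball 0 ρ₂) μ) :
    finrank ℝ E * μ.real (ball 0 1) * ∫ t in ρ₁..ρ₂, |f t - f r| * t ^ (finrank ℝ E - 1) ≤
      ∫ x in ball 0 r, f ‖x‖ ∂μ - ∫ x in Ω, f ‖x‖ ∂μ := by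
  have hΩfin : μ Ω ≠ ⊤ := hΩr ▸ measure_ball_lt_top.ne
  have hρ₁r : ρ₁ ≤ r := le_of_addHaar_ball_le_addHaar_ball μ hρ₁ hr.le
    (by rw [hμρ₁, hΩr]; exact measure_mono inter_subset_left)
  have hrρ₂ : r ≤ ρ₂ := le_of_addHaar_ball_le_addHaar_ball μ hr.le hρ₂
    (by rw [hμρ₂, hΩr]; exact le_self_add)
  have hinner : μ (ball 0 r \ ball 0 ρ₁) = μ (Ω \ ball 0 r) := by
    rw [measure_sdiff (ball_subset_ball hρ₁r) measurableSet_ball.nullMeasurableSet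
      measure_ball_lt_top.ne, hμρ₁, hΩr, ← measure_inter_add_sdiff Ω measurableSet_ball,
      ENNReal.add_sub_cancel_left (measure_ne_top_of_subset inter_subset_left hΩfin)]
  have houter : μ (ball 0 ρ₂ \ ball 0 r) = μ (Ω \ ball 0 r) := by
    rw [measure_sdiff (ball_subset_ball hrρ₂) measurableSet_ball.nullMeasurableSet
      measure_ball_lt_top.ne, hμρ₂, hΩr, ENNReal.add_sub_cancel_left hΩfin]
  have hdiff : μ (ball 0 r \ Ω) = μ (Ω \ ball 0 r) :=
    measure_sdiff_symm measurableSet_ball.nullMeasurableSet hΩ.nullMeasurableSet hΩr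
      (measure_ne_top_of_subset inter_subset_left measure_ball_lt_top.ne)
  have hintr : IntegrableOn (fun x => f ‖x‖) (ball 0 r) μ := hint.mono_set (ball_subset_ball hrρ₂)
  have hA := setIntegral_ball_sdiff_ball_le_of_subset μ hf (measurableSet_ball.diff hΩ)
    sdiff_subset (hdiff.trans hinner.symm) hintr
  have hD := setIntegral_le_setIntegral_ball_sdiff_ball_of_subset_compl μ hf hr hrρ₂
    (hΩ.diff measurableSet_ball) (fun _ hx => hx.2) houter.symm (hintΩ.mono_set sdiff_subset)
    (hint.mono_set sdiff_subset)
  rw [← setIntegral_ball_sdiff_ball_sub_setIntegral_ball_sdiff_ball μ hf hρ₁ hρ₁r hr hrρ₂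
      (hinner.trans houter.symm) hint, ← integral_inter_add_sdiff hΩ hintr,
    ← integral_inter_add_sdiff measurableSet_ball hintΩ, inter_comm]
  linarith

end MeasureTheory.Measure

theorem stmt_4_general (n : ℕ) (hn : 1 ≤ n) (f : ℝ → ℝ)
    (hfdec : AntitoneOn f (Ioi 0))
    (Ω : Set (EuclideanSpace ℝ (Fin n))) (hΩm : MeasurableSet Ω)
    (r : ℝ) (hr : 0 < r)
    (hvol : volume (ball (0 : EuclideanSpace ℝ (Fin n)) r) = volume Ω)
    (ωn ρ₁ ρ₂ : ℝ)
    (hωn : ωn = (volume (ball (0 : EuclideanSpace ℝ (Fin n)) 1)).toReal)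
    (hρ₁ : ρ₁ = ((volume (Ω ∩ ball 0 r)).toReal / ωn) ^ ((1:ℝ) / n))
    (hρ₂ : ρ₂ = (((volume Ω).toReal + (volume (Ω \ ball 0 r)).toReal) / ωn) ^ ((1:ℝ) / n))
    (hint1 : IntegrableOn (fun x => f ‖x‖) Ω volume)
    (hint2 : IntegrableOn (fun x => f ‖x‖) (ball (0 : EuclideanSpace ℝ (Fin n)) ρ₂) volume) :
    (∫ x in ball (0 : EuclideanSpace ℝ (Fin n)) r, f ‖x‖) - ∫ x in Ω, f ‖x‖ ≥
      n * ωn * ∫ t in ρ₁..ρ₂, |f t - f r| * t ^ (n - 1) := by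
  have : Nonempty (Fin n) := Fin.pos_iff_nonempty.mp hn
  have hdim : Module.finrank ℝ (EuclideanSpace ℝ (Fin n)) = n := finrank_euclideanSpace_fin
  have hball : ∀ {m : ENNReal}, m ≠ ⊤ →
      volume (ball (0 : EuclideanSpace ℝ (Fin n)) ((m.toReal / ωn) ^ ((1 : ℝ) / n))) = m :=
    fun hm => by
      have h := volume.addHaar_ball_rpow_inv_finrank (E := EuclideanSpace ℝ (Fin n)) hm
      rwa [hdim, measureReal_def, ← hωn] at h
  have hΩfin : volume Ω ≠ ⊤ := hvol ▸ measure_ball_lt_top.ne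
  have hμρ₁ : volume (ball (0 : EuclideanSpace ℝ (Fin n)) ρ₁) = volume (Ω ∩ ball 0 r) := by
    rw [hρ₁, hball (measure_ne_top_of_subset inter_subset_left hΩfin)]
  have hμρ₂ : volume (ball (0 : EuclideanSpace ℝ (Fin n)) ρ₂) =
      volume Ω + volume (Ω \ ball 0 r) := by
    have hdiff_fin : volume (Ω \ ball 0 r) ≠ ⊤ := measure_ne_top_of_subset sdiff_subset hΩfin
    rw [hρ₂, ← ENNReal.toReal_add hΩfin hdiff_fin,
      hball (ENNReal.add_ne_top.mpr ⟨hΩfin, hdiff_fin⟩)]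
  have hωn0 : 0 ≤ ωn := hωn ▸ ENNReal.toReal_nonneg
  have := volume.le_setIntegral_ball_sub_setIntegral hfdec hΩm
    (hρ₁ ▸ Real.rpow_nonneg (div_nonneg ENNReal.toReal_nonneg hωn0) _) hr
    (hρ₂ ▸ Real.rpow_nonneg (div_nonneg (by positivity) hωn0) _) hvol hμρ₁ hμρ₂ hint1 hint2
  rwa [hdim, measureReal_def, ← hωn] at this

theorem stmt_4 (n : ℕ) (hn : 1 ≤ n) (f : ℝ → ℝ)
    (hfpos : ∀ t ∈ Ioi (0:ℝ), 0 < f t)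
    (hfdec : AntitoneOn f (Ioi 0))
    (Ω : Set (EuclideanSpace ℝ (Fin n))) (hΩm : MeasurableSet Ω)
    (hΩb : Bornology.IsBounded Ω)
    (r : ℝ) (hr : 0 < r)
    (hvol : volume (ball (0 : EuclideanSpace ℝ (Fin n)) r) = volume Ω)
    (ωn ρ₁ ρ₂ : ℝ)
    (hωn : ωn = (volume (ball (0 : EuclideanSpace ℝ (Fin n)) 1)).toReal)
    (hρ₁ : ρ₁ = ((volume (Ω ∩ ball 0 r)).toReal / ωn) ^ ((1:ℝ) / n))
    (hρ₂ : ρ₂ = (((volume Ω).toReal + (volume (Ω \ ball 0 r)).toReal) / ωn) ^ ((1:ℝ) / n))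
    (hint1 : IntegrableOn (fun x => f ‖x‖) Ω volume)
    (hint2 : IntegrableOn (fun x => f ‖x‖) (ball (0 : EuclideanSpace ℝ (Fin n)) ρ₂) volume) :
    (∫ x in ball (0 : EuclideanSpace ℝ (Fin n)) r, f ‖x‖) - ∫ x in Ω, f ‖x‖ ≥
      n * ωn * ∫ t in ρ₁..ρ₂, |f t - f r| * t ^ (n - 1) :=
  stmt_4_general n hn f hfdec Ω hΩm r hr hvol ωn ρ₁ ρ₂ hωn hρ₁ hρ₂ hint1 hint2
end
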